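/- arXiv:1807.09308 — 6 statements merged into one kernel-verified Lean document; each statement's English description precedes it below -/
import Mathlib

section
/- Let p be a prime and n ≥ 1. For T ∈ GL(n, ℚ_p), the closure in GL(n, ℚ_p) of the cyclic group {T^k : k ∈ ℤ} is compact if and only if there exists m ∈ ℕ, m ≥ 1, such that T^m is an isometry of ℚ_p^n, i.e. ‖T^m(x)‖_p = ‖x‖_p for all x ∈ ℚ_p^n. -/
open scoped MatrixGroups

/-!
Over a nonarchimedean field, a matrix contracts the sup norm iff its entries are integral, so the
contracting matrices form a submonoid that is both open and compact, and its group of units,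
the isometries, is a compact open subgroup `K` of `GL(n, ℚ_p)`. If the closure of `⟨T⟩` is
compact, it meets only finitely many cosets of `K`, so two powers `T^a`, `T^b` with `a < b` lie in
the same coset and `T^(b-a) ∈ K`. Conversely, if `T^m ∈ K` then `⟨T⟩` lies in the compact set
`{T^r : 0 ≤ r < m} * K`.
-/

namespace Matrix

variable {𝕜 ι : Type*} [NormedField 𝕜] [Fintype ι]

theorem norm_mulVec_le_of_forall_norm_apply_le_one [IsUltrametricDist 𝕜] {A : Matrix ι ι 𝕜}
    (hA : ∀ i j, ‖A i j‖ ≤ 1) (x : ι → 𝕜) : ‖A *ᵥ x‖ ≤ ‖x‖ := by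
  refine (pi_norm_le_iff_of_nonneg (norm_nonneg x)).2 fun i => ?_
  refine IsUltrametricDist.norm_sum_le_of_forall_le_of_nonneg (norm_nonneg x) fun j _ => ?_
  calc ‖A i j * x j‖ = ‖A i j‖ * ‖x j‖ := norm_mul _ _
    _ ≤ 1 * ‖x‖ := mul_le_mul (hA i j) (norm_le_pi_norm x j) (norm_nonneg _) zero_le_one
    _ = ‖x‖ := one_mul _

variable [DecidableEq ι]

variable (𝕜 ι) in
def contractionSubmonoid : Submonoid (Matrix ι ι 𝕜) where
  carrier := {A | ∀ x : ι → 𝕜, ‖A *ᵥ x‖ ≤ ‖x‖}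
  one_mem' x := by simp
  mul_mem' {A B} hA hB x := by
    rw [← mulVec_mulVec]
    exact (hA _).trans (hB x)

theorem norm_apply_le_one_of_forall_norm_mulVec_le {A : Matrix ι ι 𝕜}
    (hA : ∀ x : ι → 𝕜, ‖A *ᵥ x‖ ≤ ‖x‖) (i j : ι) : ‖A i j‖ ≤ 1 :=
  calc ‖A i j‖ = ‖(A *ᵥ Pi.single j 1) i‖ := by simp [mulVec_single]
    _ ≤ ‖A *ᵥ Pi.single j 1‖ := norm_le_pi_norm _ i
    _ ≤ ‖(Pi.single j 1 : ι → 𝕜)‖ := hA _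
    _ = 1 := by rw [Pi.norm_single, norm_one]

theorem mem_contractionSubmonoid_iff [IsUltrametricDist 𝕜] {A : Matrix ι ι 𝕜} :
    A ∈ contractionSubmonoid 𝕜 ι ↔ ∀ i j, ‖A i j‖ ≤ 1 :=
  ⟨norm_apply_le_one_of_forall_norm_mulVec_le, norm_mulVec_le_of_forall_norm_apply_le_one⟩

theorem mem_units_contractionSubmonoid_iff {A : GL ι 𝕜} :
    A ∈ (contractionSubmonoid 𝕜 ι).units ↔ ∀ x : ι → 𝕜, ‖(A : Matrix ι ι 𝕜) *ᵥ x‖ = ‖x‖ := by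
  refine ⟨fun ⟨hA, hA'⟩ x => le_antisymm (hA x) ?_, fun h => ⟨fun x => (h x).le, fun x => ?_⟩⟩
  · calc ‖x‖ = ‖(↑A⁻¹ : Matrix ι ι 𝕜) *ᵥ ((A : Matrix ι ι 𝕜) *ᵥ x)‖ := by
          rw [mulVec_mulVec, A.inv_mul, one_mulVec]
      _ ≤ ‖(A : Matrix ι ι 𝕜) *ᵥ x‖ := hA' _
  · refine le_of_eq ?_
    calc ‖(↑A⁻¹ : Matrix ι ι 𝕜) *ᵥ x‖ = ‖(A : Matrix ι ι 𝕜) *ᵥ ((↑A⁻¹ : Matrix ι ι 𝕜) *ᵥ x)‖ :=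
          (h _).symm
      _ = ‖x‖ := by rw [mulVec_mulVec, A.mul_inv, one_mulVec]

theorem isOpen_contractionSubmonoid [IsUltrametricDist 𝕜] :
    IsOpen (contractionSubmonoid 𝕜 ι : Set (Matrix ι ι 𝕜)) := by
  have : (contractionSubmonoid 𝕜 ι : Set (Matrix ι ι 𝕜)) =
      ⋂ i, ⋂ j, (fun A : Matrix ι ι 𝕜 => A i j) ⁻¹' Metric.closedBall 0 1 := by
    ext A
    simp [mem_contractionSubmonoid_iff]
  rw [this]
  exact isOpen_iInter_of_finite fun i => isOpen_iInter_of_finite fun j =>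
    (IsUltrametricDist.isOpen_closedBall 0 one_ne_zero).preimage (by fun_prop)

theorem isCompact_contractionSubmonoid [IsUltrametricDist 𝕜] [ProperSpace 𝕜] :
    IsCompact (contractionSubmonoid 𝕜 ι : Set (Matrix ι ι 𝕜)) := by
  have : (contractionSubmonoid 𝕜 ι : Set (Matrix ι ι 𝕜)) =
      Set.univ.pi fun _ => Set.univ.pi fun _ => Metric.closedBall 0 1 := by
    ext A
    rw [SetLike.mem_coe, mem_contractionSubmonoid_iff]
    change _ ↔ ∀ i ∈ Set.univ, ∀ j ∈ Set.univ, A i j ∈ Metric.closedBall (0 : 𝕜) 1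
    simp
  rw [this]
  exact isCompact_univ_pi fun _ => isCompact_univ_pi fun _ => isCompact_closedBall 0 1

end Matrix

section CyclicSubgroup

variable {G : Type*} [Group G] [TopologicalSpace G] [IsTopologicalGroup G]

theorem exists_pow_mem_of_isCompact_closure_zpowers {K : Subgroup G} (hK : IsOpen (K : Set G))
    {g : G} (hg : IsCompact (closure (Subgroup.zpowers g : Set G))) :
    ∃ m : ℕ, 1 ≤ m ∧ g ^ m ∈ K := by
  have := QuotientGroup.discreteTopology hK
  have hfin := (hg.image (QuotientGroup.continuous_mk (N := K))).finite_of_discrete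
  have hmem (k : ℕ) :
      ((g ^ k : G) : G ⧸ K) ∈ QuotientGroup.mk '' closure (Subgroup.zpowers g : Set G) :=
    ⟨g ^ k, subset_closure (Subgroup.npow_mem_zpowers g k), rfl⟩
  obtain ⟨a, b, hab, heq⟩ := hfin.exists_lt_map_eq_of_forall_mem hmem
  refine ⟨b - a, by omega, ?_⟩
  rwa [QuotientGroup.eq, ← pow_mul_pow_sub g hab.le, inv_mul_cancel_left] at heq

theorem isCompact_closure_zpowers_of_pow_mem {K : Subgroup G} (hK : IsCompact (K : Set G))
    {g : G} {m : ℕ} (hm : 1 ≤ m) (hgm : g ^ m ∈ K) :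
    IsCompact (closure (Subgroup.zpowers g : Set G)) := by
  have hfin : IsCompact ((g ^ ·) '' Set.Ico (0 : ℤ) m) := ((Set.finite_Ico _ _).image _).isCompact
  refine (hfin.mul hK).closure_of_subset ?_
  rintro _ ⟨k, rfl⟩
  have hm' : (0 : ℤ) < m := by exact_mod_cast hm
  refine ⟨g ^ (k % m), ⟨k % m, ⟨Int.emod_nonneg k hm'.ne', Int.emod_lt_of_pos k hm'⟩, rfl⟩,
    (g ^ m) ^ (k / m), K.zpow_mem hgm _, ?_⟩
  show g ^ (k % m) * (g ^ m) ^ (k / m) = g ^ k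
  rw [← zpow_natCast, ← zpow_mul, ← zpow_add, Int.emod_add_mul_ediv]

end CyclicSubgroup

theorem stmt1_general (p : ℕ) [Fact p.Prime] (n : ℕ) (T : GL (Fin n) ℚ_[p]) :
    IsCompact (closure {A : GL (Fin n) ℚ_[p] | ∃ k : ℤ, A = T ^ k}) ↔
      ∃ m : ℕ, 1 ≤ m ∧ ∀ x : Fin n → ℚ_[p],
        ‖((T ^ m : GL (Fin n) ℚ_[p]) : Matrix (Fin n) (Fin n) ℚ_[p]).mulVec x‖ = ‖x‖ := by
  have hzpowers : {A : GL (Fin n) ℚ_[p] | ∃ k : ℤ, A = T ^ k} = Subgroup.zpowers T := by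
    ext A
    simp [Subgroup.mem_zpowers_iff, eq_comm]
  simp only [hzpowers, ← Matrix.mem_units_contractionSubmonoid_iff]
  exact ⟨exists_pow_mem_of_isCompact_closure_zpowers
      (Submonoid.isOpen_units Matrix.isOpen_contractionSubmonoid),
    fun ⟨m, hm, hTm⟩ => isCompact_closure_zpowers_of_pow_mem
      (Submonoid.units_isCompact Matrix.isCompact_contractionSubmonoid) hm hTm⟩

/-- For `T ∈ GL(n, ℚ_p)`, the closure of the cyclic group `{T^k : k ∈ ℤ}` in `GL(n, ℚ_p)` is
compact iff some positive power `T^m` is an isometry of `ℚ_p^n` (with the sup norm). -/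
theorem stmt1 (p : ℕ) [Fact p.Prime] (n : ℕ) (hn : 1 ≤ n) (T : GL (Fin n) ℚ_[p]) :
    IsCompact (closure {A : GL (Fin n) ℚ_[p] | ∃ k : ℤ, A = T ^ k}) ↔
      ∃ m : ℕ, 1 ≤ m ∧ ∀ x : Fin n → ℚ_[p],
        ‖((T ^ m : GL (Fin n) ℚ_[p]) : Matrix (Fin n) (Fin n) ℚ_[p]).mulVec x‖ = ‖x‖ :=
  stmt1_general p n T
end

section
/- Let X be a Hausdorff topological space and let G be a Hausdorff topological group acting continuously on X by homeomorphisms. Let H be a subsemigroup of G and K a compact subgroup of G such that every element of H normalises K. Then the semigroup HK = {hk : h ∈ H, k ∈ K} acts distally on X if and only if H acts distally on X. -/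
/-! If `f = k ∘ g` with `k` in a compact set `K`, the pairs `(f x, f y)` lie in `K • C`, where `C` is
the closure of the pairs `(g x, g y)`. Since `K` is compact, `K • C` is closed, so a diagonal point
`(d, d)` adherent to the pairs `(f x, f y)` has the form `k • p` with `p ∈ C`; then
`p = (k⁻¹ • d, k⁻¹ • d)` is a diagonal point in `C`. For `HK` this applies with
`h * k = (h * k * h⁻¹) * h`, as `h` normalises `K`. -/

/-- A family `S` of self-maps of a topological space `X` acts distally if for every pair of
distinct points `x, y`, the closure of `{(f x, f y) : f ∈ S}` in `X × X` does not meet the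
diagonal. -/
def ActsDistally {X : Type*} [TopologicalSpace X] (S : Set (X → X)) : Prop :=
  ∀ x y : X, x ≠ y → ∀ d : X, (d, d) ∉ closure ((fun f => (f x, f y)) '' S)

open Pointwise

theorem ActsDistally.mono {X : Type*} [TopologicalSpace X] {S T : Set (X → X)}
    (hT : ActsDistally T) (hST : S ⊆ T) : ActsDistally S :=
  fun x y hxy d hd => hT x y hxy d (closure_mono (Set.image_mono hST) hd)

theorem ActsDistally.of_forall_eq_smul_comp {G X : Type*} [Group G] [TopologicalSpace G]
    [ContinuousInv G] [TopologicalSpace X] [MulAction G X] [ContinuousSMul G X]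
    {K : Set G} (hK : IsCompact K) {S T : Set (X → X)} (hT : ActsDistally T)
    (hST : ∀ f ∈ S, ∃ k ∈ K, ∃ g ∈ T, f = fun x => k • g x) : ActsDistally S := by
  intro x y hxy d hd
  set C := closure ((fun g : X → X => (g x, g y)) '' T)
  have hsub : (fun f : X → X => (f x, f y)) '' S ⊆ K • C := by
    rintro _ ⟨f, hf, rfl⟩
    obtain ⟨k, hk, g, hg, rfl⟩ := hST f hf
    exact Set.smul_mem_smul hk (subset_closure (Set.mem_image_of_mem _ hg))
  obtain ⟨k, -, p, hp, hkp⟩ :=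
    closure_minimal hsub (isClosed_closure.smul_left_of_isCompact hK) hd
  have hp_diag : p = (k⁻¹ • d, k⁻¹ • d) := by
    rw [eq_inv_smul_iff.mpr hkp]
    rfl
  exact hT x y hxy (k⁻¹ • d) (hp_diag ▸ hp)

theorem stmt2_general {G X : Type*} [Group G] [TopologicalSpace G] [IsTopologicalGroup G]
    [TopologicalSpace X] [MulAction G X] [ContinuousSMul G X]
    (H : Subsemigroup G) (K : Subgroup G) (hK : IsCompact (K : Set G))
    (hnorm : ∀ h ∈ H, ∀ k ∈ K, h * k * h⁻¹ ∈ K) :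
    ActsDistally {f : X → X | ∃ h ∈ H, ∃ k ∈ K, f = fun x => (h * k) • x} ↔
      ActsDistally {f : X → X | ∃ h ∈ H, f = fun x => h • x} := by
  constructor
  · refine fun hHK => hHK.mono ?_
    rintro _ ⟨h, hh, rfl⟩
    exact ⟨h, hh, 1, K.one_mem, by simp⟩
  · refine fun hH => hH.of_forall_eq_smul_comp hK ?_
    rintro _ ⟨h, hh, k, hk, rfl⟩
    refine ⟨h * k * h⁻¹, hnorm h hh k hk, _, ⟨h, hh, rfl⟩, ?_⟩
    simp only [smul_smul, inv_mul_cancel_right]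

/-- If a Hausdorff topological group `G` acts continuously on a Hausdorff space `X`, `H` is a
subsemigroup of `G` and `K` a compact subgroup of `G` normalised by every element of `H`, then
the semigroup `HK` acts distally on `X` iff `H` acts distally on `X`. -/
theorem stmt2 {G X : Type*} [Group G] [TopologicalSpace G] [IsTopologicalGroup G] [T2Space G]
    [TopologicalSpace X] [T2Space X] [MulAction G X] [ContinuousSMul G X]
    (H : Subsemigroup G) (K : Subgroup G) (hK : IsCompact (K : Set G))
    (hnorm : ∀ h ∈ H, ∀ k ∈ K, h * k * h⁻¹ ∈ K) :
    ActsDistally {f : X → X | ∃ h ∈ H, ∃ k ∈ K, f = fun x => (h * k) • x} ↔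
      ActsDistally {f : X → X | ∃ h ∈ H, f = fun x => h • x} :=
  stmt2_general H K hK hnorm
end

section
/- Let X be a Hausdorff topological space and let G be a Hausdorff topological group acting continuously on X by homeomorphisms. Let T, S ∈ G with TS = ST, and suppose the closure in G of the cyclic group generated by S is compact. Then T acts distally on X if and only if TS acts distally on X. -/
/-!
If `(d, d)` is a limit point of the `T * S`-orbit of `(x, y)` along some ultrafilter on `ℤ`, then
by compactness the powers `S ^ (-k)` converge along it to some `s`, so the `T`-orbit
`T ^ k • (x, y) = S ^ (-k) • (T * S) ^ k • (x, y)` accumulates at the diagonal point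
`(s • d, s • d)`. Applying this also to `T * S` and `S⁻¹` gives the converse.
-/

open Filter Topology Set

lemma exists_tendsto_ultrafilter_of_mem_closure_range {ι Y : Type*} [TopologicalSpace Y]
    {φ : ι → Y} {p : Y} (hp : p ∈ closure (range φ)) :
    ∃ 𝒰 : Ultrafilter ι, Tendsto φ 𝒰 (𝓝 p) := by
  rw [mem_closure_iff_clusterPt, ← map_top] at hp
  obtain ⟨𝒰, -, h𝒰⟩ := mapClusterPt_iff_ultrafilter.mp hp
  exact ⟨𝒰, h𝒰⟩

lemma exists_smul_mem_closure_range_smul {ι G Y : Type*} [TopologicalSpace G] [TopologicalSpace Y]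
    [SMul G Y] [ContinuousSMul G Y] {K : Set G} (hK : IsCompact K) {h : ι → G} (hhK : ∀ i, h i ∈ K)
    {φ : ι → Y} {p : Y} (hp : p ∈ closure (range φ)) :
    ∃ s ∈ K, s • p ∈ closure (range fun i => h i • φ i) := by
  obtain ⟨𝒰, hφ⟩ := exists_tendsto_ultrafilter_of_mem_closure_range hp
  obtain ⟨s, hsK, hs⟩ :=
    hK.ultrafilter_le_nhds (𝒰.map h) (le_principal_iff.mpr (mem_map.mpr (univ_mem' hhK)))
  exact ⟨s, hsK, mem_closure_of_tendsto ((tendsto_map'_iff.mp hs).smul hφ)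
    (univ_mem' fun i => mem_range_self i)⟩

lemma actsDistally_zpow_smul_iff {G X : Type*} [Group G] [TopologicalSpace X] [MulAction G X]
    (g : G) :
    ActsDistally {f : X → X | ∃ k : ℤ, f = fun x => g ^ k • x} ↔
      ∀ x y : X, x ≠ y → ∀ d : X, (d, d) ∉ closure (range fun k : ℤ => g ^ k • (x, y)) := by
  have hrange : ∀ x y : X, (fun f : X → X => (f x, f y)) ''
      {f : X → X | ∃ k : ℤ, f = fun x => g ^ k • x} = range fun k : ℤ => g ^ k • (x, y) := by
    intro x y
    ext p
    simp only [mem_image, mem_range, Prod.smul_mk]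
    constructor
    · rintro ⟨f, ⟨k, rfl⟩, rfl⟩
      exact ⟨k, rfl⟩
    · rintro ⟨k, rfl⟩
      exact ⟨_, ⟨k, rfl⟩, rfl⟩
  simp only [ActsDistally, hrange]

lemma Commute.zpow_neg_smul_mul_zpow_smul {G X : Type*} [Group G] [MulAction G X] {T S : G}
    (hc : Commute T S) (k : ℤ) (z : X) : S ^ (-k) • (T * S) ^ k • z = T ^ k • z := by
  rw [smul_smul, hc.mul_zpow, (hc.zpow_zpow k k).eq, zpow_neg, inv_mul_cancel_left]

lemma ActsDistally.mul_of_commute {G X : Type*} [Group G] [TopologicalSpace G]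
    [TopologicalSpace X] [MulAction G X] [ContinuousSMul G X] {T S : G}
    (hT : ActsDistally {f : X → X | ∃ k : ℤ, f = fun x => T ^ k • x}) (hc : Commute T S)
    {K : Set G} (hK : IsCompact K) (hSK : ∀ k : ℤ, S ^ k ∈ K) :
    ActsDistally {f : X → X | ∃ k : ℤ, f = fun x => (T * S) ^ k • x} := by
  rw [actsDistally_zpow_smul_iff] at hT ⊢
  intro x y hxy d hd
  obtain ⟨s, -, hs⟩ := exists_smul_mem_closure_range_smul hK (fun k => hSK (-k)) hd
  simp only [hc.zpow_neg_smul_mul_zpow_smul, Prod.smul_mk] at hs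
  exact hT x y hxy (s • d) hs

theorem stmt3_general {G X : Type*} [Group G] [TopologicalSpace G]
    [TopologicalSpace X] [MulAction G X] [ContinuousSMul G X]
    (T S : G) (hcomm : T * S = S * T)
    (hS : IsCompact (closure {g : G | ∃ k : ℤ, g = S ^ k})) :
    ActsDistally {f : X → X | ∃ k : ℤ, f = fun x => (T ^ k) • x} ↔
      ActsDistally {f : X → X | ∃ k : ℤ, f = fun x => ((T * S) ^ k) • x} := by
  have hSK : ∀ k : ℤ, S ^ k ∈ closure {g : G | ∃ k : ℤ, g = S ^ k} :=
    fun k => subset_closure ⟨k, rfl⟩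
  have hc : Commute T S := hcomm
  refine ⟨fun hT => hT.mul_of_commute hc hS hSK, fun hTS => ?_⟩
  simpa only [mul_inv_cancel_right] using
    hTS.mul_of_commute (hc.mul_left (Commute.refl S)).inv_right hS
      fun k => by simpa only [inv_zpow'] using hSK (-k)

/-- If a Hausdorff topological group `G` acts continuously on a Hausdorff space `X`, `T, S ∈ G`
commute, and the closure of the cyclic group generated by `S` is compact in `G`, then `T` acts
distally on `X` iff `TS` acts distally on `X`. -/
theorem stmt3 {G X : Type*} [Group G] [TopologicalSpace G] [IsTopologicalGroup G] [T2Space G]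
    [TopologicalSpace X] [T2Space X] [MulAction G X] [ContinuousSMul G X]
    (T S : G) (hcomm : T * S = S * T)
    (hS : IsCompact (closure {g : G | ∃ k : ℤ, g = S ^ k})) :
    ActsDistally {f : X → X | ∃ k : ℤ, f = fun x => (T ^ k) • x} ↔
      ActsDistally {f : X → X | ∃ k : ℤ, f = fun x => ((T * S) ^ k) • x} :=
  stmt3_general T S hcomm hS
end

section
/- Let p be a prime, n ≥ 1, and T ∈ GL(n, ℚ_p). If the map T̄ : S_n → S_n is distal, then there exist m ∈ ℕ, m ≥ 1, and l ∈ ℤ such that the linear map p^l T^m is distal on ℚ_p^n. -/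
open scoped MatrixGroups

/-- The real number `r`, assumed to be an integer power of `p`, interpreted as the
corresponding scalar in `ℚ_p` (junk value otherwise). -/
noncomputable def realToPadic (p : ℕ) [Fact p.Prime] (r : ℝ) : ℚ_[p] :=
  (p : ℚ_[p]) ^ ⌊Real.logb p r⌋

/-- The map `T̄` induced on the `p`-adic unit sphere by the matrix `T`:
`T̄(x) = ‖T(x)‖_p ⬝ T(x)`. -/
noncomputable def sphereMap (p : ℕ) [Fact p.Prime] {n : ℕ}
    (T : Matrix (Fin n) (Fin n) ℚ_[p]) (y : Fin n → ℚ_[p]) : Fin n → ℚ_[p] :=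
  realToPadic p ‖T.mulVec y‖ • T.mulVec y

/-- A family `S` of self-maps acts distally on an invariant subset `A`. -/
def ActsDistallyOn {X : Type*} [TopologicalSpace X] (S : Set (X → X)) (A : Set X) : Prop :=
  ∀ x ∈ A, ∀ y ∈ A, x ≠ y → ∀ d ∈ A, (d, d) ∉ closure ((fun f => (f x, f y)) '' S)

namespace Stmt5Aux

variable {p : ℕ} [Fact p.Prime] {n : ℕ}

instance : IsUltrametricDist (Fin n → ℚ_[p]) := by
  apply IsUltrametricDist.isUltrametricDist_of_forall_norm_add_le_max_norm
  intro x y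
  apply pi_norm_le_iff_of_nonneg (le_max_iff.2 (Or.inl (norm_nonneg _))) |>.2
  intro i
  refine (IsUltrametricDist.norm_add_le_max _ _).trans (max_le_max ?_ ?_) <;>
    exact norm_le_pi_norm _ i

lemma norm_eq_of_sub_lt' {V : Type*} [SeminormedAddCommGroup V] [IsUltrametricDist V]
    {a b : V} (h : ‖b - a‖ < ‖a‖) : ‖b‖ = ‖a‖ := by
  have hb : ‖b‖ ≤ ‖a‖ := by
    calc ‖b‖ = ‖(b - a) + a‖ := by rw [sub_add_cancel]
    _ ≤ max ‖b - a‖ ‖a‖ := IsUltrametricDist.norm_add_le_max _ _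
    _ = ‖a‖ := max_eq_right h.le
  refine le_antisymm hb ?_
  by_contra hlt
  push_neg at hlt
  have h2 : ‖a‖ ≤ max ‖a - b‖ ‖b‖ := by
    calc ‖a‖ = ‖(a - b) + b‖ := by rw [sub_add_cancel]
    _ ≤ _ := IsUltrametricDist.norm_add_le_max _ _
  have h3 : ‖a - b‖ = ‖b - a‖ := by rw [← neg_sub, norm_neg]
  rw [h3] at h2
  rcases max_cases ‖b - a‖ ‖b‖ with ⟨he, _⟩ | ⟨he, _⟩ <;> rw [he] at h2 <;> linarith

lemma norm_eq_zpow (hn : 1 ≤ n) (v : Fin n → ℚ_[p]) (hv : v ≠ 0) :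
    ∃ e : ℤ, ‖v‖ = (p:ℝ)^e := by
  have h0 : ‖v‖ ≠ 0 := norm_ne_zero_iff.2 hv
  obtain ⟨i, hi⟩ : ∃ i, ‖v‖ = ‖v i‖ := by
    have hne : (Finset.univ : Finset (Fin n)).Nonempty := by
      rw [Finset.univ_nonempty_iff]; exact Fin.pos_iff_nonempty.mp hn
    obtain ⟨i, _, hi⟩ := Finset.exists_mem_eq_sup Finset.univ hne (fun i => ‖v i‖₊)
    exact ⟨i, by rw [Pi.norm_def, hi]; rfl⟩
  have : v i ≠ 0 := by
    intro h; apply h0; rw [hi, h, norm_zero]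
  exact ⟨-(v i).valuation, by rw [hi, Padic.norm_eq_zpow_neg_valuation this]⟩

lemma realToPadic_zpow (e : ℤ) : realToPadic p ((p:ℝ)^e) = (p:ℚ_[p])^e := by
  unfold realToPadic
  congr 1
  have hp1 : (1:ℝ) < p := by exact_mod_cast (Fact.out : p.Prime).one_lt
  have : Real.logb p ((p:ℝ)^e) = e := by
    rw [Real.logb, Real.log_zpow, mul_div_assoc,
      div_self (Real.log_ne_zero_of_pos_of_ne_one (by linarith) (by linarith)), mul_one]
  rw [this, Int.floor_intCast]

lemma exists_smul_norm_one (hn : 1 ≤ n) (v : Fin n → ℚ_[p]) (hv : v ≠ 0) :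
    ∃ a : ℤ, ‖(p:ℚ_[p])^a • v‖ = 1 := by
  obtain ⟨e, he⟩ := norm_eq_zpow hn v hv
  have hp0 : (p:ℝ) ≠ 0 := Nat.cast_ne_zero.2 (Fact.out : p.Prime).ne_zero
  refine ⟨e, ?_⟩
  rw [norm_smul, Padic.norm_p_zpow, he, ← zpow_add₀ hp0]
  simp

lemma mulVec_norm_le (M : Matrix (Fin n) (Fin n) ℚ_[p]) (v : Fin n → ℚ_[p])
    (C : ℝ) (hC : 0 ≤ C) (hcol : ∀ j, ‖M.mulVec (Pi.single j 1)‖ ≤ C) :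
    ‖M.mulVec v‖ ≤ C * ‖v‖ := by
  apply pi_norm_le_iff_of_nonneg (by positivity) |>.2
  intro i
  show ‖∑ j, M i j * v j‖ ≤ C * ‖v‖
  apply IsUltrametricDist.norm_sum_le_of_forall_le_of_nonneg (by positivity)
  intro j _
  rw [norm_mul]
  have h1 : ‖M i j‖ ≤ C := by
    refine le_trans ?_ (hcol j)
    have := norm_le_pi_norm (M.mulVec (Pi.single j 1)) i
    simpa [Matrix.mulVec_single_one] using this
  exact mul_le_mul h1 (norm_le_pi_norm v j) (norm_nonneg _) hC

lemma mulVec_norm_le_entries (M : Matrix (Fin n) (Fin n) ℚ_[p]) (v : Fin n → ℚ_[p])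
    (C : ℝ) (hC : 0 ≤ C) (hent : ∀ i j, ‖M i j‖ ≤ C) : ‖M.mulVec v‖ ≤ C * ‖v‖ := by
  apply pi_norm_le_iff_of_nonneg (by positivity) |>.2
  intro i
  show ‖∑ j, M i j * v j‖ ≤ C * ‖v‖
  apply IsUltrametricDist.norm_sum_le_of_forall_le_of_nonneg (by positivity)
  intro j _
  rw [norm_mul]
  exact mul_le_mul (hent i j) (norm_le_pi_norm v j) (norm_nonneg _) hC

lemma single_ne_zero' (j : Fin n) : (Pi.single j 1 : Fin n → ℚ_[p]) ≠ 0 := by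
  intro hj
  have := congrFun hj j
  simp at this

section Main

variable {T : GL (Fin n) ℚ_[p]}

/-- `T^k` as a matrix. -/
noncomputable def Mk (T : GL (Fin n) ℚ_[p]) (k : ℤ) : Matrix (Fin n) (Fin n) ℚ_[p] :=
  ((T ^ k : GL (Fin n) ℚ_[p]) : Matrix (Fin n) (Fin n) ℚ_[p])

/-- The distality hypothesis for the sphere maps. -/
def distalHyp (T : GL (Fin n) ℚ_[p]) : Prop := ActsDistallyOn
    {f : (Fin n → ℚ_[p]) → Fin n → ℚ_[p] |
        ∃ k : ℤ, f = sphereMap p ((T ^ k : GL (Fin n) ℚ_[p]) : Matrix (Fin n) (Fin n) ℚ_[p])}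
      (Metric.sphere (0 : Fin n → ℚ_[p]) 1)

lemma Mk_mulVec_Mk (a b : ℤ) (v : Fin n → ℚ_[p]) :
    (Mk T a).mulVec ((Mk T b).mulVec v) = (Mk T (a+b)).mulVec v := by
  rw [Matrix.mulVec_mulVec]
  congr 1
  rw [Mk, Mk, Mk, ← Units.val_mul, ← zpow_add]

lemma Mk_zero_mulVec (v : Fin n → ℚ_[p]) : (Mk T 0).mulVec v = v := by
  rw [Mk, zpow_zero, Units.val_one, Matrix.one_mulVec]

lemma Mk_mulVec_ne_zero (k : ℤ) {v : Fin n → ℚ_[p]} (hv : v ≠ 0) :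
    (Mk T k).mulVec v ≠ 0 := by
  intro h
  apply hv
  have := congrArg ((Mk T (-k)).mulVec) h
  rwa [Mk_mulVec_Mk, neg_add_cancel, Mk_zero_mulVec, Matrix.mulVec_zero] at this

lemma lemA' (hn : 1 ≤ n) (h : distalHyp T)
    (x w : Fin n → ℚ_[p]) (hx : ‖x‖ = 1) (hw : 0 < ‖w‖) (hw1 : ‖w‖ < 1) :
    ∃ c > 0, ∀ k : ℤ, c * ‖(Mk T k).mulVec x‖ ≤ ‖(Mk T k).mulVec w‖ := by
  by_contra hcon
  push_neg at hcon
  have hsel : ∀ i : ℕ, ∃ k : ℤ,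
      ‖(Mk T k).mulVec w‖ < min 1 (1/(i+1):ℝ) * ‖(Mk T k).mulVec x‖ := by
    intro i
    obtain ⟨k, hk⟩ := hcon (min 1 (1/(i+1):ℝ)) (lt_min one_pos (by positivity))
    exact ⟨k, hk⟩
  choose k hk using hsel
  have hx0 : x ≠ 0 := by intro h0; rw [h0, norm_zero] at hx; norm_num at hx
  have hw0 : w ≠ 0 := by intro h0; rw [h0, norm_zero] at hw; exact lt_irrefl _ hw
  set y := x + w with hy
  have hyx : y - x = w := by simp [hy]
  have hxy : x ≠ y := by
    intro hxy; apply hw0; rw [← hyx, ← hxy, sub_self]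
  have hyn : ‖y‖ = 1 := by
    have := norm_eq_of_sub_lt' (a := x) (b := y) (by rw [hyx, hx]; exact hw1)
    rwa [hx] at this
  have key : ∀ i : ℕ, ∃ e : ℤ,
      ‖(Mk T (k i)).mulVec x‖ = (p:ℝ)^e ∧
      ‖(Mk T (k i)).mulVec y‖ = (p:ℝ)^e := by
    intro i
    obtain ⟨e, he⟩ := norm_eq_zpow hn _ (Mk_mulVec_ne_zero (k i) hx0)
    refine ⟨e, he, ?_⟩
    have hlt : ‖(Mk T (k i)).mulVec y - (Mk T (k i)).mulVec x‖ < ‖(Mk T (k i)).mulVec x‖ := by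
      rw [← Matrix.mulVec_sub, hyx]
      calc ‖(Mk T (k i)).mulVec w‖ < min 1 (1/(i+1):ℝ) * ‖(Mk T (k i)).mulVec x‖ := hk i
      _ ≤ 1 * ‖(Mk T (k i)).mulVec x‖ := by
          apply mul_le_mul_of_nonneg_right (min_le_left _ _) (norm_nonneg _)
      _ = ‖(Mk T (k i)).mulVec x‖ := one_mul _
    rw [norm_eq_of_sub_lt' hlt, he]
  choose e he1 he2 using key
  set u : ℕ → (Fin n → ℚ_[p]) := fun i => sphereMap p (Mk T (k i)) x with hu
  set z : ℕ → (Fin n → ℚ_[p]) := fun i => sphereMap p (Mk T (k i)) y with hz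
  have hnormp : ∀ (a : ℤ) (v : Fin n → ℚ_[p]), ‖(p:ℚ_[p])^a • v‖ = (p:ℝ)^(-a) * ‖v‖ := by
    intro a v; rw [norm_smul, Padic.norm_p_zpow]
  have hppos : (0:ℝ) < p := by exact_mod_cast (Fact.out : p.Prime).pos
  have husphere : ∀ i, u i ∈ Metric.sphere (0 : Fin n → ℚ_[p]) 1 := by
    intro i
    rw [Metric.mem_sphere, dist_zero_right, hu]
    show ‖realToPadic p ‖(Mk T (k i)).mulVec x‖ • (Mk T (k i)).mulVec x‖ = 1
    rw [he1 i, realToPadic_zpow, hnormp, he1 i, ← Real.rpow_intCast, ← Real.rpow_intCast,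
      ← Real.rpow_add hppos]
    simp
  have hdiff : ∀ i, ‖z i - u i‖ ≤ 1/(i+1:ℝ) := by
    intro i
    have : z i - u i = ((p:ℚ_[p])^(e i)) • ((Mk T (k i)).mulVec w) := by
      rw [hz, hu]
      show realToPadic p ‖(Mk T (k i)).mulVec y‖ • (Mk T (k i)).mulVec y
          - realToPadic p ‖(Mk T (k i)).mulVec x‖ • (Mk T (k i)).mulVec x = _
      rw [he1 i, he2 i, realToPadic_zpow, ← smul_sub, ← Matrix.mulVec_sub, hyx]
    rw [this, hnormp]
    have := (hk i).le
    calc (p:ℝ)^(-(e i)) * ‖(Mk T (k i)).mulVec w‖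
        ≤ (p:ℝ)^(-(e i)) * (min 1 (1/(i+1):ℝ) * ‖(Mk T (k i)).mulVec x‖) := by
          apply mul_le_mul_of_nonneg_left this (by positivity)
      _ ≤ (p:ℝ)^(-(e i)) * ((1/(i+1):ℝ) * (p:ℝ)^(e i)) := by
          rw [he1 i]
          apply mul_le_mul_of_nonneg_left
            (mul_le_mul_of_nonneg_right (min_le_right _ _) (by positivity)) (by positivity)
      _ = 1/(i+1:ℝ) := by
          rw [mul_comm ((1:ℝ)/(i+1)) _, ← mul_assoc, ← zpow_add₀ (ne_of_gt hppos)]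
          simp
  have hcs : IsCompact (Metric.sphere (0 : Fin n → ℚ_[p]) 1) := isCompact_sphere _ _
  obtain ⟨d, hd, φ, hφ, hconv⟩ := hcs.tendsto_subseq husphere
  have hzconv : Filter.Tendsto (z ∘ φ) Filter.atTop (nhds d) := by
    have h0 : Filter.Tendsto (fun i => z (φ i) - u (φ i)) Filter.atTop (nhds 0) := by
      rw [tendsto_zero_iff_norm_tendsto_zero]
      apply squeeze_zero (fun i => norm_nonneg _) (fun i => hdiff (φ i))
      have : Filter.Tendsto (fun i : ℕ => 1/(i+1:ℝ)) Filter.atTop (nhds 0) :=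
        tendsto_one_div_add_atTop_nhds_zero_nat
      exact this.comp hφ.tendsto_atTop
    have h1 := hconv.add h0
    simp only [add_zero] at h1
    have : (z ∘ φ) = fun i => (u ∘ φ) i + (z (φ i) - u (φ i)) := by
      funext i; simp [Function.comp]
    rw [this]
    exact h1
  have hmem : (d, d) ∈ closure ((fun f => (f x, f y)) ''
      {f : (Fin n → ℚ_[p]) → Fin n → ℚ_[p] |
        ∃ kk : ℤ, f = sphereMap p ((T ^ kk : GL (Fin n) ℚ_[p]) : Matrix (Fin n) (Fin n) ℚ_[p])}) := by
    refine mem_closure_of_tendsto (Filter.Tendsto.prodMk_nhds hconv hzconv) ?_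
    apply Filter.Eventually.of_forall
    intro i
    exact ⟨sphereMap p (Mk T (k (φ i))), ⟨k (φ i), rfl⟩, rfl⟩
  exact h x (by rw [Metric.mem_sphere, dist_zero_right]; exact hx)
    y (by rw [Metric.mem_sphere, dist_zero_right]; exact hyn) hxy d hd hmem

lemma lemA (hn : 1 ≤ n) (h : distalHyp T)
    (x w : Fin n → ℚ_[p]) (hx : x ≠ 0) (hw : w ≠ 0) :
    ∃ c > 0, ∀ k : ℤ, c * ‖(Mk T k).mulVec x‖ ≤ ‖(Mk T k).mulVec w‖ := by
  obtain ⟨a, ha⟩ := exists_smul_norm_one hn x hx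
  obtain ⟨b, hb⟩ := exists_smul_norm_one hn w hw
  have hppos : (0:ℝ) < p := by exact_mod_cast (Fact.out : p.Prime).pos
  have hp1 : (1:ℝ) < p := by exact_mod_cast (Fact.out : p.Prime).one_lt
  have hnormp : ∀ (c : ℤ) (v : Fin n → ℚ_[p]), ‖(p:ℚ_[p])^c • v‖ = (p:ℝ)^(-c) * ‖v‖ := by
    intro c v; rw [norm_smul, Padic.norm_p_zpow]
  have hw' : ‖(p:ℚ_[p])^(b+1) • w‖ = (p:ℝ)^(-1:ℤ) := by
    have h2 : (p:ℚ_[p])^(b+1) • w = (p:ℚ_[p])^(1:ℤ) • ((p:ℚ_[p])^b • w) := by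
      rw [smul_smul, ← zpow_add₀ (by exact_mod_cast (Fact.out : p.Prime).ne_zero : (p:ℚ_[p]) ≠ 0)]
      ring_nf
    rw [h2, hnormp, hb, mul_one]
  have hwlt : (p:ℝ)^(-1:ℤ) < 1 := by
    rw [zpow_neg_one]
    exact inv_lt_one_of_one_lt₀ hp1
  obtain ⟨c', hc'pos, hc'⟩ := lemA' hn h ((p:ℚ_[p])^a • x) ((p:ℚ_[p])^(b+1) • w) ha
    (by rw [hw']; positivity) (by rw [hw']; exact hwlt)
  refine ⟨c' * (p:ℝ)^(-a) * (p:ℝ)^(b+1), by positivity, fun k => ?_⟩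
  have h1 := hc' k
  rw [Matrix.mulVec_smul, Matrix.mulVec_smul, hnormp, hnormp] at h1
  have h2 := mul_le_mul_of_nonneg_left h1 (le_of_lt (zpow_pos hppos (b+1)))
  calc c' * (p:ℝ)^(-a) * (p:ℝ)^(b+1) * ‖(Mk T k).mulVec x‖
      = (p:ℝ)^(b+1) * (c' * ((p:ℝ)^(-a) * ‖(Mk T k).mulVec x‖)) := by ring
    _ ≤ (p:ℝ)^(b+1) * ((p:ℝ)^(-(b+1)) * ‖(Mk T k).mulVec w‖) := h2
    _ = ((p:ℝ)^(b+1) * (p:ℝ)^(-(b+1))) * ‖(Mk T k).mulVec w‖ := by ring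
    _ = ‖(Mk T k).mulVec w‖ := by
        rw [← zpow_add₀ (ne_of_gt hppos),
          show b + 1 + -(b + 1) = (0:ℤ) from by ring, zpow_zero, one_mul]

lemma lemB (hn : 1 ≤ n) (h : distalHyp T) (i0 : Fin n) :
    ∃ Cup > 0, ∀ (k : ℤ) (v : Fin n → ℚ_[p]),
      ‖(Mk T k).mulVec v‖ ≤ Cup * ‖(Mk T k).mulVec (Pi.single i0 1)‖ * ‖v‖ := by
  have hsel : ∀ j : Fin n, ∃ c > 0, ∀ k : ℤ,
      c * ‖(Mk T k).mulVec (Pi.single j 1)‖ ≤ ‖(Mk T k).mulVec (Pi.single i0 1)‖ :=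
    fun j => lemA hn h (Pi.single j 1) (Pi.single i0 1) (single_ne_zero' j) (single_ne_zero' i0)
  choose c hcpos hc using hsel
  have hne : (Finset.univ : Finset (Fin n)).Nonempty := ⟨i0, Finset.mem_univ _⟩
  set cm := Finset.univ.inf' hne c with hcm
  have hcmpos : 0 < cm := by
    rw [hcm, Finset.lt_inf'_iff]
    exact fun j _ => hcpos j
  refine ⟨1/cm, by positivity, fun k v => ?_⟩
  apply mulVec_norm_le _ _ _ (by positivity)
  intro j
  have h1 := hc j k
  have h2 : cm ≤ c j := Finset.inf'_le _ (Finset.mem_univ j)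
  rw [div_mul_eq_mul_div, le_div_iff₀ hcmpos, one_mul] at *
  calc ‖(Mk T k).mulVec (Pi.single j 1)‖ * cm
      ≤ ‖(Mk T k).mulVec (Pi.single j 1)‖ * c j := by
        apply mul_le_mul_of_nonneg_left h2 (norm_nonneg _)
    _ = c j * ‖(Mk T k).mulVec (Pi.single j 1)‖ := mul_comm _ _
    _ ≤ _ := h1

lemma lemC (hn : 1 ≤ n) (h : distalHyp T) (i0 : Fin n) {Cup : ℝ} (hCup : 0 < Cup)
    (hB : ∀ (k : ℤ) (v : Fin n → ℚ_[p]),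
      ‖(Mk T k).mulVec v‖ ≤ Cup * ‖(Mk T k).mulVec (Pi.single i0 1)‖ * ‖v‖) :
    ∃ c0 > 0, ∀ (k : ℤ) (v : Fin n → ℚ_[p]),
      c0 * ‖(Mk T k).mulVec (Pi.single i0 1)‖ * ‖v‖ ≤ ‖(Mk T k).mulVec v‖ := by
  by_contra hcon
  push_neg at hcon
  have hβpos : ∀ k : ℤ, 0 < ‖(Mk T k).mulVec (Pi.single i0 1)‖ :=
    fun k => norm_pos_iff.2 (Mk_mulVec_ne_zero k (single_ne_zero' i0))
  have hnormp : ∀ (c : ℤ) (v : Fin n → ℚ_[p]), ‖(p:ℚ_[p])^c • v‖ = (p:ℝ)^(-c) * ‖v‖ := by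
    intro c v; rw [norm_smul, Padic.norm_p_zpow]
  have hsel : ∀ i : ℕ, ∃ (k : ℤ) (v : Fin n → ℚ_[p]), ‖v‖ = 1 ∧
      ‖(Mk T k).mulVec v‖ < (1/(i+1:ℝ)) * ‖(Mk T k).mulVec (Pi.single i0 1)‖ := by
    intro i
    obtain ⟨k, v, hv⟩ := hcon (1/(i+1:ℝ)) (by positivity)
    have hv0 : v ≠ 0 := by
      intro h0
      rw [h0] at hv
      simp [Matrix.mulVec_zero] at hv
    obtain ⟨a, ha⟩ := exists_smul_norm_one hn v hv0
    refine ⟨k, (p:ℚ_[p])^a • v, ha, ?_⟩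
    rw [Matrix.mulVec_smul, hnormp]
    calc (p:ℝ)^(-a) * ‖(Mk T k).mulVec v‖
        < (p:ℝ)^(-a) * (1/(i+1:ℝ) * ‖(Mk T k).mulVec (Pi.single i0 1)‖ * ‖v‖) := by
          apply mul_lt_mul_of_pos_left hv
          have hppos : (0:ℝ) < p := by exact_mod_cast (Fact.out : p.Prime).pos
          positivity
      _ = 1/(i+1:ℝ) * ‖(Mk T k).mulVec (Pi.single i0 1)‖ * ((p:ℝ)^(-a) * ‖v‖) := by ring
      _ = 1/(i+1:ℝ) * ‖(Mk T k).mulVec (Pi.single i0 1)‖ := by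
          rw [← hnormp a v, ha, mul_one]
  choose k v hv1 hvlt using hsel
  have hsph : ∀ i, v i ∈ Metric.sphere (0 : Fin n → ℚ_[p]) 1 := by
    intro i; rw [Metric.mem_sphere, dist_zero_right]; exact hv1 i
  obtain ⟨u, hu, φ, hφ, hconv⟩ :=
    (isCompact_sphere (0 : Fin n → ℚ_[p]) 1).tendsto_subseq hsph
  have hu1 : ‖u‖ = 1 := by rwa [Metric.mem_sphere, dist_zero_right] at hu
  have hu0 : u ≠ 0 := by intro h0; rw [h0, norm_zero] at hu1; norm_num at hu1
  obtain ⟨cu, hcupos, hcu⟩ := lemA (T := T) hn h (Pi.single i0 1) u (single_ne_zero' i0) hu0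
  obtain ⟨N1, hN1⟩ := Metric.tendsto_atTop.1 hconv (cu/Cup) (by positivity)
  obtain ⟨N2, hN2⟩ := exists_nat_gt (1/cu)
  set i := max N1 N2 with hi
  have hd1 : ‖v (φ i) - u‖ < cu/Cup := by
    have := hN1 i (le_max_left _ _)
    rwa [dist_eq_norm] at this
  have hd2 : 1/(φ i + 1:ℝ) < cu := by
    have h1 : (N2:ℝ) < φ i + 1 := by
      have : (N2:ℝ) ≤ φ i := by
        exact_mod_cast le_trans (le_max_right N1 N2) (hφ.le_apply)
      linarith
    rw [div_lt_iff₀ (by positivity)]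
    rw [div_lt_iff₀ hcupos] at hN2
    calc (1:ℝ) < cu * N2 := by rw [mul_comm]; exact hN2
      _ ≤ cu * (φ i + 1) := by
          apply mul_le_mul_of_nonneg_left h1.le hcupos.le
  set K := k (φ i) with hK
  have hβ := hβpos K
  have hmax : ‖(Mk T K).mulVec u‖ ≤
      max ‖(Mk T K).mulVec (u - v (φ i))‖ ‖(Mk T K).mulVec (v (φ i))‖ := by
    have : (Mk T K).mulVec u
        = (Mk T K).mulVec (u - v (φ i)) + (Mk T K).mulVec (v (φ i)) := by
      rw [← Matrix.mulVec_add, sub_add_cancel]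
    rw [this]
    exact IsUltrametricDist.norm_add_le_max _ _
  have h1 : ‖(Mk T K).mulVec (u - v (φ i))‖ < cu * ‖(Mk T K).mulVec (Pi.single i0 1)‖ := by
    calc ‖(Mk T K).mulVec (u - v (φ i))‖
        ≤ Cup * ‖(Mk T K).mulVec (Pi.single i0 1)‖ * ‖u - v (φ i)‖ := hB K _
      _ < Cup * ‖(Mk T K).mulVec (Pi.single i0 1)‖ * (cu/Cup) := by
          apply mul_lt_mul_of_pos_left _ (by positivity)
          rw [← norm_neg]
          simpa [neg_sub] using hd1
      _ = cu * ‖(Mk T K).mulVec (Pi.single i0 1)‖ := by field_simp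
  have h2 : ‖(Mk T K).mulVec (v (φ i))‖ < cu * ‖(Mk T K).mulVec (Pi.single i0 1)‖ := by
    calc ‖(Mk T K).mulVec (v (φ i))‖
        < (1/(φ i + 1:ℝ)) * ‖(Mk T K).mulVec (Pi.single i0 1)‖ := hvlt (φ i)
      _ < cu * ‖(Mk T K).mulVec (Pi.single i0 1)‖ := by
          apply mul_lt_mul_of_pos_right hd2 hβ
  have hlow : cu * ‖(Mk T K).mulVec (Pi.single i0 1)‖ ≤ ‖(Mk T K).mulVec u‖ := hcu K
  have : ‖(Mk T K).mulVec u‖ < cu * ‖(Mk T K).mulVec (Pi.single i0 1)‖ :=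
    lt_of_le_of_lt hmax (max_lt h1 h2)
  linarith

lemma lemE (hn : 1 ≤ n) (i0 : Fin n) {Cup c0 : ℝ} (hCup : 0 < Cup) (hc0 : 0 < c0)
    (hB : ∀ (k : ℤ) (v : Fin n → ℚ_[p]),
      ‖(Mk T k).mulVec v‖ ≤ Cup * ‖(Mk T k).mulVec (Pi.single i0 1)‖ * ‖v‖)
    (hC : ∀ (k : ℤ) (v : Fin n → ℚ_[p]),
      c0 * ‖(Mk T k).mulVec (Pi.single i0 1)‖ * ‖v‖ ≤ ‖(Mk T k).mulVec v‖) :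
    ∃ (m : ℕ) (l : ℤ), 1 ≤ m ∧
      ∀ v : Fin n → ℚ_[p], ‖(p:ℚ_[p])^l • (Mk T (m:ℤ)).mulVec v - v‖ ≤ (1/2) * ‖v‖ := by
  have hppos : (0:ℝ) < p := by exact_mod_cast (Fact.out : p.Prime).pos
  have hpne : (p:ℚ_[p]) ≠ 0 := by exact_mod_cast (Fact.out : p.Prime).ne_zero
  have hnormp : ∀ (c : ℤ) (v : Fin n → ℚ_[p]), ‖(p:ℚ_[p])^c • v‖ = (p:ℝ)^(-c) * ‖v‖ := by
    intro c v; rw [norm_smul, Padic.norm_p_zpow]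
  have hγ : ∀ k : ℤ, ∃ e : ℤ, ‖(Mk T k).mulVec (Pi.single i0 1)‖ = (p:ℝ)^e :=
    fun k => norm_eq_zpow hn _ (Mk_mulVec_ne_zero k (single_ne_zero' i0))
  choose γ hγ using hγ
  set seq : ℕ → (Fin n → Fin n → ℚ_[p]) :=
    fun k => fun i j => (p:ℚ_[p])^(γ (k:ℤ)) * (Mk T (k:ℤ)) i j with hseq
  have hentry : ∀ (k : ℤ) (i j : Fin n),
      ‖(Mk T k) i j‖ ≤ Cup * ‖(Mk T k).mulVec (Pi.single i0 1)‖ := by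
    intro k i j
    have h1 : (Mk T k) i j = ((Mk T k).mulVec (Pi.single j 1)) i := by
      rw [Matrix.mulVec_single_one]
      rfl
    rw [h1]
    refine le_trans (norm_le_pi_norm _ i) ?_
    have := hB k (Pi.single j 1)
    rwa [Pi.norm_single, norm_one, mul_one] at this
  have hseqbd : ∀ k : ℕ, seq k ∈ Metric.closedBall (0 : Fin n → Fin n → ℚ_[p]) Cup := by
    intro k
    rw [Metric.mem_closedBall, dist_zero_right]
    apply pi_norm_le_iff_of_nonneg hCup.le |>.2
    intro i
    apply pi_norm_le_iff_of_nonneg hCup.le |>.2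
    intro j
    show ‖(p:ℚ_[p])^(γ (k:ℤ)) * (Mk T (k:ℤ)) i j‖ ≤ Cup
    rw [norm_mul, Padic.norm_p_zpow]
    calc (p:ℝ)^(-γ (k:ℤ)) * ‖(Mk T (k:ℤ)) i j‖
        ≤ (p:ℝ)^(-γ (k:ℤ)) * (Cup * ‖(Mk T (k:ℤ)).mulVec (Pi.single i0 1)‖) := by
          apply mul_le_mul_of_nonneg_left (hentry _ i j) (by positivity)
      _ = Cup := by
          rw [hγ, ← mul_assoc, mul_comm ((p:ℝ)^(-γ (k:ℤ))) Cup, mul_assoc,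
            ← zpow_add₀ (ne_of_gt hppos), neg_add_cancel, zpow_zero, mul_one]
  obtain ⟨L, _, φ, hφ, hconv⟩ :=
    (isCompact_closedBall (0 : Fin n → Fin n → ℚ_[p]) Cup).tendsto_subseq hseqbd
  set ε := (1/2) * c0 / Cup with hε
  have hεpos : 0 < ε := by positivity
  obtain ⟨N, hN⟩ := Metric.tendsto_atTop.1 hconv (ε/2) (by positivity)
  set k1 := φ N with hk1
  set k2 := φ (N+1) with hk2
  have hk12 : k1 < k2 := hφ (Nat.lt_succ_self N)
  have hdist : ‖seq k2 - seq k1‖ < ε := by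
    have d1 := hN N (le_refl N)
    have d2 := hN (N+1) (Nat.le_succ N)
    calc ‖seq k2 - seq k1‖ = dist (seq k2) (seq k1) := (dist_eq_norm _ _).symm
      _ ≤ dist (seq k2) L + dist L (seq k1) := dist_triangle _ _ _
      _ < ε/2 + ε/2 := by
          rw [dist_comm L (seq k1)]
          exact add_lt_add d2 d1
      _ = ε := by ring
  set m := k2 - k1 with hm
  have hm1 : 1 ≤ m := by omega
  have hmz : (m:ℤ) = (k2:ℤ) - (k1:ℤ) := by omega
  set l := γ (k2:ℤ) - γ (k1:ℤ) with hl
  refine ⟨m, l, hm1, fun v => ?_⟩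
  set u := (p:ℚ_[p])^(-γ (k1:ℤ)) • (Mk T (-(k1:ℤ))).mulVec v with hu
  set Md : Matrix (Fin n) (Fin n) ℚ_[p] := Matrix.of (fun i j => seq k2 i j - seq k1 i j) with hMd
  have hid : Md.mulVec u = (p:ℚ_[p])^l • (Mk T (m:ℤ)).mulVec v - v := by
    have hMd2 : Md = ((p:ℚ_[p])^(γ (k2:ℤ)) • Mk T (k2:ℤ)) -
        ((p:ℚ_[p])^(γ (k1:ℤ)) • Mk T (k1:ℤ)) := by
      ext i j
      simp [hMd, hseq, Matrix.sub_apply, Matrix.smul_apply, smul_eq_mul]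
    rw [hMd2, Matrix.sub_mulVec, Matrix.smul_mulVec, Matrix.smul_mulVec, hu,
      Matrix.mulVec_smul, Matrix.mulVec_smul, Mk_mulVec_Mk, Mk_mulVec_Mk,
      smul_smul, smul_smul, ← zpow_add₀ hpne, ← zpow_add₀ hpne,
      show γ (k2:ℤ) + -γ (k1:ℤ) = l from by rw [hl]; ring,
      show (k2:ℤ) + -(k1:ℤ) = (m:ℤ) from by rw [hmz]; ring,
      show γ (k1:ℤ) + -γ (k1:ℤ) = 0 from by ring, zpow_zero, one_smul,
      show (k1:ℤ) + -(k1:ℤ) = 0 from by ring, Mk_zero_mulVec]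
  have hβk1 : ‖(Mk T (k1:ℤ)).mulVec (Pi.single i0 1)‖ = (p:ℝ)^(γ (k1:ℤ)) := hγ _
  have hD : ‖(Mk T (-(k1:ℤ))).mulVec (Pi.single i0 1)‖ ≤ (p:ℝ)^(-γ (k1:ℤ)) / c0 := by
    have h1 := hC (-(k1:ℤ)) ((Mk T (k1:ℤ)).mulVec (Pi.single i0 1))
    rw [Mk_mulVec_Mk, neg_add_cancel, Mk_zero_mulVec, Pi.norm_single, norm_one, hβk1] at h1
    have hzp : (0:ℝ) < (p:ℝ)^(γ (k1:ℤ)) := by positivity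
    have hx : ‖(Mk T (-(k1:ℤ))).mulVec (Pi.single i0 1)‖ ≤ 1 / (c0 * (p:ℝ)^(γ (k1:ℤ))) := by
      rw [le_div_iff₀ (by positivity)]
      calc ‖(Mk T (-(k1:ℤ))).mulVec (Pi.single i0 1)‖ * (c0 * (p:ℝ)^(γ (k1:ℤ)))
          = c0 * ‖(Mk T (-(k1:ℤ))).mulVec (Pi.single i0 1)‖ * (p:ℝ)^(γ (k1:ℤ)) := by ring
        _ ≤ 1 := h1
    refine hx.trans (le_of_eq ?_)
    rw [zpow_neg]
    field_simp
  have hunorm : ‖u‖ ≤ (Cup / c0) * ‖v‖ := by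
    rw [hu, hnormp, neg_neg]
    calc (p:ℝ)^(γ (k1:ℤ)) * ‖(Mk T (-(k1:ℤ))).mulVec v‖
        ≤ (p:ℝ)^(γ (k1:ℤ)) * (Cup * ‖(Mk T (-(k1:ℤ))).mulVec (Pi.single i0 1)‖ * ‖v‖) := by
          apply mul_le_mul_of_nonneg_left (hB _ _) (by positivity)
      _ ≤ (p:ℝ)^(γ (k1:ℤ)) * (Cup * ((p:ℝ)^(-γ (k1:ℤ)) / c0) * ‖v‖) := by
          apply mul_le_mul_of_nonneg_left _ (by positivity)
          apply mul_le_mul_of_nonneg_right _ (norm_nonneg _)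
          apply mul_le_mul_of_nonneg_left hD hCup.le
      _ = ((p:ℝ)^(γ (k1:ℤ)) * (p:ℝ)^(-γ (k1:ℤ))) * (Cup / c0) * ‖v‖ := by ring
      _ = (Cup / c0) * ‖v‖ := by
          rw [← zpow_add₀ (ne_of_gt hppos), add_neg_cancel, zpow_zero, one_mul]
  have hMdent : ∀ i j, ‖Md i j‖ ≤ ε := by
    intro i j
    have h1 : Md i j = (seq k2 - seq k1) i j := rfl
    rw [h1]
    refine le_trans (le_trans (norm_le_pi_norm _ j) (norm_le_pi_norm _ i)) hdist.le
  rw [← hid]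
  calc ‖Md.mulVec u‖ ≤ ε * ‖u‖ := mulVec_norm_le_entries _ _ _ hεpos.le hMdent
    _ ≤ ε * ((Cup / c0) * ‖v‖) := by
        apply mul_le_mul_of_nonneg_left hunorm hεpos.le
    _ = (1/2) * ‖v‖ := by
        rw [hε]
        field_simp

lemma lemG {m : ℕ} {l : ℤ}
    (hF : ∀ v : Fin n → ℚ_[p], ‖(p:ℚ_[p])^l • (Mk T (m:ℤ)).mulVec v‖ = ‖v‖) :
    ∀ (k : ℤ) (v : Fin n → ℚ_[p]),
      ‖(p:ℚ_[p])^(l*k) • (Mk T ((m:ℤ)*k)).mulVec v‖ = ‖v‖ := by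
  have hpne : (p:ℚ_[p]) ≠ 0 := by exact_mod_cast (Fact.out : p.Prime).ne_zero
  have key : ∀ (a b : ℤ) (v : Fin n → ℚ_[p]),
      (p:ℚ_[p])^(l+a) • (Mk T ((m:ℤ)+b)).mulVec v
        = (p:ℚ_[p])^l • (Mk T (m:ℤ)).mulVec ((p:ℚ_[p])^a • (Mk T b).mulVec v) := by
    intro a b v
    rw [Matrix.mulVec_smul, smul_smul, Mk_mulVec_Mk, ← zpow_add₀ hpne]
  have pos : ∀ (j : ℕ) (v : Fin n → ℚ_[p]),
      ‖(p:ℚ_[p])^(l*(j:ℤ)) • (Mk T ((m:ℤ)*(j:ℤ))).mulVec v‖ = ‖v‖ := by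
    intro j
    induction j with
    | zero => intro v; simp [Mk_zero_mulVec]
    | succ j ih =>
        intro v
        have h1 : l * ((j:ℤ)+1) = l + l * (j:ℤ) := by ring
        have h2 : (m:ℤ) * ((j:ℤ)+1) = (m:ℤ) + (m:ℤ) * (j:ℤ) := by ring
        rw [show ((j+1:ℕ):ℤ) = (j:ℤ)+1 from by push_cast; ring, h1, h2, key, hF, ih]
  intro k v
  rcases le_or_gt 0 k with hk | hk
  · obtain ⟨j, rfl⟩ := Int.eq_ofNat_of_zero_le hk
    exact pos j v
  · set j := (-k).toNat with hj
    have hjk : (j:ℤ) = -k := by omega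
    set w := (p:ℚ_[p])^(l*k) • (Mk T ((m:ℤ)*k)).mulVec v with hw
    have hrec : (p:ℚ_[p])^(l*(j:ℤ)) • (Mk T ((m:ℤ)*(j:ℤ))).mulVec w = v := by
      rw [hw, Matrix.mulVec_smul, smul_smul, Mk_mulVec_Mk, ← zpow_add₀ hpne,
        show l*(j:ℤ) + l*k = 0 from by rw [hjk]; ring,
        show (m:ℤ)*(j:ℤ) + (m:ℤ)*k = 0 from by rw [hjk]; ring,
        zpow_zero, one_smul, Mk_zero_mulVec]
    have := pos j w
    rw [hrec] at this
    exact this.symm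

end Main

end Stmt5Aux

open Stmt5Aux in
/-- If `T̄` is distal on the `p`-adic unit sphere, then `p^l T^m` is distal on `ℚ_p^n` for
some `m ≥ 1` and `l ∈ ℤ`. The cyclic group generated by `p^l T^m` consists of the maps
`v ↦ p^(lk) • T^(mk)(v)`, `k ∈ ℤ`. -/
theorem stmt5 (p : ℕ) [Fact p.Prime] (n : ℕ) (hn : 1 ≤ n) (T : GL (Fin n) ℚ_[p])
    (h : ActsDistallyOn {f : (Fin n → ℚ_[p]) → Fin n → ℚ_[p] |
        ∃ k : ℤ, f = sphereMap p ((T ^ k : GL (Fin n) ℚ_[p]) : Matrix (Fin n) (Fin n) ℚ_[p])}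
      (Metric.sphere (0 : Fin n → ℚ_[p]) 1)) :
    ∃ m : ℕ, 1 ≤ m ∧ ∃ l : ℤ,
      ActsDistallyOn {f : (Fin n → ℚ_[p]) → Fin n → ℚ_[p] |
          ∃ k : ℤ, f = fun v => (p : ℚ_[p]) ^ (l * k) •
            ((T ^ ((m : ℤ) * k) : GL (Fin n) ℚ_[p]) : Matrix (Fin n) (Fin n) ℚ_[p]).mulVec v}
        Set.univ := by
  have hd : distalHyp T := h
  set i0 : Fin n := ⟨0, hn⟩ with hi0
  obtain ⟨Cup, hCup, hB⟩ := lemB hn hd i0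
  obtain ⟨c0, hc0, hC⟩ := lemC hn hd i0 hCup hB
  obtain ⟨m, l, hm1, hE⟩ := lemE hn i0 hCup hc0 hB hC
  have hF : ∀ v : Fin n → ℚ_[p], ‖(p:ℚ_[p])^l • (Mk T (m:ℤ)).mulVec v‖ = ‖v‖ := by
    intro v
    rcases eq_or_ne v 0 with rfl | hv
    · simp [Matrix.mulVec_zero]
    · apply norm_eq_of_sub_lt'
      calc ‖(p:ℚ_[p])^l • (Mk T (m:ℤ)).mulVec v - v‖ ≤ (1/2) * ‖v‖ := hE v
        _ < ‖v‖ := by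
            have := norm_pos_iff.2 hv
            linarith
  have hG := lemG hF
  refine ⟨m, hm1, l, ?_⟩
  intro x _ y _ hxy d _
  intro hmem
  have hsub : ((fun f => (f x, f y)) '' {f : (Fin n → ℚ_[p]) → Fin n → ℚ_[p] |
        ∃ k : ℤ, f = fun v => (p : ℚ_[p]) ^ (l * k) •
          ((T ^ ((m : ℤ) * k) : GL (Fin n) ℚ_[p]) : Matrix (Fin n) (Fin n) ℚ_[p]).mulVec v})
      ⊆ {q : (Fin n → ℚ_[p]) × (Fin n → ℚ_[p]) | ‖q.1 - q.2‖ = ‖x - y‖} := by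
    rintro q ⟨f, ⟨k, rfl⟩, rfl⟩
    show ‖(p : ℚ_[p]) ^ (l * k) •
          ((T ^ ((m : ℤ) * k) : GL (Fin n) ℚ_[p]) : Matrix (Fin n) (Fin n) ℚ_[p]).mulVec x
        - (p : ℚ_[p]) ^ (l * k) •
          ((T ^ ((m : ℤ) * k) : GL (Fin n) ℚ_[p]) : Matrix (Fin n) (Fin n) ℚ_[p]).mulVec y‖
      = ‖x - y‖
    rw [← smul_sub, ← Matrix.mulVec_sub]
    exact hG k (x - y)
  have hcl := closure_minimal hsub
    (isClosed_eq ((continuous_fst.sub continuous_snd).norm) continuous_const)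
  have hthis := hcl hmem
  simp only [Set.mem_setOf_eq, sub_self, norm_zero] at hthis
  exact hxy (sub_eq_zero.1 (norm_eq_zero.1 hthis.symm))
end

section
/- Let p be a prime, n ≥ 1, and T ∈ GL(n, ℚ_p) with |det T|_p = 1. If the map T̄ : S_n → S_n is distal, then T is distal on ℚ_p^n. -/
open scoped MatrixGroups

/-!
If `T` is not distal, there is `z ≠ 0` with `‖T^k z‖` arbitrarily small. Since `|det T^k|_p = 1`,
every `T^k` has a column of norm at least `1`, so by pigeonhole a single basis vector `e` has
`‖T^k e‖ ≥ 1` for times `k` at which `‖T^k z‖` is as small as we like. For a multiple `w` of `z`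
of norm `p⁻¹`, the vectors `e` and `e + w` lie on the sphere, and by the ultrametric inequality
`T^k e` and `T^k (e + w)` have the same norm, so `T̄^k e` and `T̄^k (e + w)` differ by a vector
of norm `‖T^k w‖ / ‖T^k e‖`. Compactness of the sphere then puts a diagonal point in the orbit
closure of `(e, e + w)`.
-/

open Metric
open scoped Matrix

theorem IsUltrametricDist.norm_add_eq_left_of_norm_lt {E : Type*} [SeminormedAddCommGroup E]
    [IsUltrametricDist E] {a b : E} (h : ‖b‖ < ‖a‖) : ‖a + b‖ = ‖a‖ := by
  rw [IsUltrametricDist.norm_add_eq_max_of_norm_ne_norm h.ne', max_eq_left h.le]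

section Ultrametric

variable {R : Type*} [NormedCommRing R] [NormOneClass R] [IsUltrametricDist R]
  {ι : Type*} [Fintype ι] [DecidableEq ι]

theorem Matrix.norm_det_le_pow_of_forall_norm_le (A : Matrix ι ι R) {C : ℝ} (hC : 0 ≤ C)
    (hA : ∀ i j, ‖A i j‖ ≤ C) : ‖A.det‖ ≤ C ^ Fintype.card ι := by
  rw [Matrix.det_apply]
  refine IsUltrametricDist.norm_sum_le_of_forall_le_of_nonneg (by positivity) fun σ _ => ?_
  rw [Units.smul_def, zsmul_eq_mul]
  calc ‖((Equiv.Perm.sign σ : ℤ) : R) * ∏ i, A (σ i) i‖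
      ≤ ‖((Equiv.Perm.sign σ : ℤ) : R)‖ * ∏ i, ‖A (σ i) i‖ :=
        (norm_mul_le _ _).trans (by gcongr; exact Finset.norm_prod_le _ _)
    _ ≤ 1 * ∏ _i : ι, C := by
        gcongr with i
        · exact IsUltrametricDist.norm_intCast_le_one R _
        · exact hA _ _
    _ = C ^ Fintype.card ι := by rw [one_mul, Finset.prod_const, Finset.card_univ]

theorem Matrix.exists_one_le_norm_col_of_one_le_norm_det [Nonempty ι] (A : Matrix ι ι R)
    (hA : 1 ≤ ‖A.det‖) : ∃ j, 1 ≤ ‖A.col j‖ := by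
  by_contra! hcol
  obtain ⟨q, hq⟩ := Finite.exists_max fun q : ι × ι => ‖A q.1 q.2‖
  have hq1 : ‖A q.1 q.2‖ < 1 := (norm_le_pi_norm (A.col q.2) q.1).trans_lt (hcol q.2)
  have := A.norm_det_le_pow_of_forall_norm_le (norm_nonneg _) fun i j => hq (i, j)
  have := pow_lt_one₀ (norm_nonneg _) hq1 (Fintype.card_ne_zero (α := ι))
  linarith

end Ultrametric

theorem exists_forall_exists_lt_and_of_finite {ι κ : Type*} [Finite ι] {f : κ → ℝ}
    {P : κ → ι → Prop} (hf : ∀ ε > 0, ∃ k, f k < ε) (hP : ∀ k, ∃ i, P k i) :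
    ∃ i, ∀ ε > 0, ∃ k, f k < ε ∧ P k i := by
  by_contra! h
  choose ε hε hεP using h
  obtain ⟨k₀, -⟩ := hf 1 one_pos
  have : Nonempty ι := ⟨(hP k₀).choose⟩
  obtain ⟨i₀, hi₀⟩ := Finite.exists_min ε
  obtain ⟨k, hk⟩ := hf (ε i₀) (hε i₀)
  obtain ⟨i, hi⟩ := hP k
  exact hεP i k (hk.trans_le (hi₀ i)) hi

theorem IsCompact.exists_diag_mem_closure {X : Type*} [MetricSpace X] {K : Set X}
    (hK : IsCompact K) {S : Set (X × X)}
    (hS : ∀ ε > 0, ∃ q ∈ S ∩ K ×ˢ K, dist q.1 q.2 < ε) : ∃ d ∈ K, (d, d) ∈ closure S := by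
  set C := closure (S ∩ K ×ˢ K)
  have hCK : C ⊆ K ×ˢ K := closure_minimal Set.inter_subset_right (hK.prod hK).isClosed
  have hC : IsCompact C := (hK.prod hK).of_isClosed_subset isClosed_closure hCK
  obtain ⟨q₀, hq₀, -⟩ := hS 1 one_pos
  obtain ⟨q, hqC, hmin⟩ := hC.exists_isMinOn ⟨q₀, subset_closure hq₀⟩
    (continuous_fst.dist continuous_snd).continuousOn
  have hq : q.1 = q.2 := by
    by_contra hne
    obtain ⟨s, hs, hslt⟩ := hS _ (dist_pos.mpr hne)
    exact (hmin (subset_closure hs)).not_gt hslt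
  refine ⟨q.1, (hCK hqC).1, ?_⟩
  rw [show (q.1, q.1) = q from Prod.ext rfl hq]
  exact closure_mono Set.inter_subset_left hqC

theorem exists_norm_sub_lt_of_diag_mem_closure {E : Type*} [SeminormedAddCommGroup E]
    {S : Set (E → E)} {x y d : E} (h : (d, d) ∈ closure ((fun f => (f x, f y)) '' S))
    {ε : ℝ} (hε : 0 < ε) : ∃ f ∈ S, ‖f x - f y‖ < ε := by
  obtain ⟨_, ⟨f, hf, rfl⟩, hdist⟩ := Metric.mem_closure_iff.mp h (ε / 2) (half_pos hε)
  rw [Prod.dist_eq, max_lt_iff] at hdist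
  refine ⟨f, hf, ?_⟩
  calc ‖f x - f y‖ = dist (f x) (f y) := (dist_eq_norm _ _).symm
    _ ≤ dist d (f x) + dist d (f y) := dist_triangle_left _ _ _
    _ < ε / 2 + ε / 2 := add_lt_add hdist.1 hdist.2
    _ = ε := add_halves ε

theorem Matrix.GeneralLinearGroup.norm_det_zpow {K : Type*} [NormedField K] {ι : Type*}
    [Fintype ι] [DecidableEq ι] (T : GL ι K) (k : ℤ) :
    ‖((T ^ k : GL ι K) : Matrix ι ι K).det‖ = ‖(T : Matrix ι ι K).det‖ ^ k := by
  rw [← Matrix.GeneralLinearGroup.val_det_apply, map_zpow, Units.val_zpow_eq_zpow_val, norm_zpow,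
    Matrix.GeneralLinearGroup.val_det_apply]

theorem forall_exists_norm_mulVec_smul_lt {K ι κ : Type*} [NormedField K] [Fintype ι]
    {M : κ → Matrix ι ι K} {z : ι → K} (hM : ∀ ε > 0, ∃ k, ‖M k *ᵥ z‖ < ε) (c : K) :
    ∀ ε > 0, ∃ k, ‖M k *ᵥ (c • z)‖ < ε := fun ε hε => by
  obtain ⟨k, hk⟩ := hM (ε / (‖c‖ + 1)) (by positivity)
  refine ⟨k, ?_⟩
  calc ‖M k *ᵥ (c • z)‖ = ‖c‖ * ‖M k *ᵥ z‖ := by rw [Matrix.mulVec_smul, norm_smul]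
    _ ≤ (‖c‖ + 1) * ‖M k *ᵥ z‖ := by gcongr; linarith
    _ < ε := by rwa [← lt_div_iff₀' (by positivity)]

section Padic

variable {p : ℕ} [Fact p.Prime] {ι : Type*} [Fintype ι]

theorem realToPadic_zpow (m : ℤ) : realToPadic p ((p : ℝ) ^ m) = (p : ℚ_[p]) ^ m := by
  have hlog : Real.log p ≠ 0 := (Real.log_pos (by exact_mod_cast (Fact.out : p.Prime).one_lt)).ne'
  rw [realToPadic, Real.logb, Real.log_zpow, mul_div_assoc, div_self hlog, mul_one,
    Int.floor_intCast]

theorem exists_pi_norm_eq_zpow {v : ι → ℚ_[p]} (hv : v ≠ 0) : ∃ m : ℤ, ‖v‖ = (p : ℝ) ^ m := by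
  obtain ⟨i, -⟩ := Function.ne_iff.mp hv
  have : Nonempty ι := ⟨i⟩
  obtain ⟨j, hj : ‖v j‖ = ‖v‖⟩ := (IsGreatest.pi_norm v).1
  have hvj : v j ≠ 0 := norm_ne_zero_iff.mp (hj ▸ norm_ne_zero_iff.mpr hv)
  exact ⟨-(v j).valuation, by rw [← hj, Padic.norm_eq_zpow_neg_valuation hvj]⟩

theorem norm_realToPadic_pi_norm {v : ι → ℚ_[p]} (hv : v ≠ 0) :
    ‖realToPadic p ‖v‖‖ = ‖v‖⁻¹ := by
  obtain ⟨m, hm⟩ := exists_pi_norm_eq_zpow hv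
  rw [hm, realToPadic_zpow, Padic.norm_p_zpow, zpow_neg]

theorem norm_realToPadic_pi_norm_smul_self {v : ι → ℚ_[p]} (hv : v ≠ 0) :
    ‖realToPadic p ‖v‖ • v‖ = 1 := by
  rw [norm_smul, norm_realToPadic_pi_norm hv, inv_mul_cancel₀ (norm_ne_zero_iff.mpr hv)]

variable {n : ℕ}

theorem sphereMap_mem_sphere {A : Matrix (Fin n) (Fin n) ℚ_[p]} {y : Fin n → ℚ_[p]}
    (h : A *ᵥ y ≠ 0) :
    sphereMap p A y ∈ sphere 0 1 :=
  mem_sphere_zero_iff_norm.mpr (norm_realToPadic_pi_norm_smul_self h)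

section Perturbation

variable {A : Matrix (Fin n) (Fin n) ℚ_[p]} {e w : Fin n → ℚ_[p]}

theorem sphereMap_add_mem_sphere (h : ‖A *ᵥ w‖ < ‖A *ᵥ e‖) :
    sphereMap p A (e + w) ∈ sphere 0 1 := by
  refine sphereMap_mem_sphere ?_
  rw [Matrix.mulVec_add, ← norm_pos_iff, IsUltrametricDist.norm_add_eq_left_of_norm_lt h]
  exact (norm_nonneg _).trans_lt h

theorem dist_sphereMap_add (h : ‖A *ᵥ w‖ < ‖A *ᵥ e‖) :
    dist (sphereMap p A e) (sphereMap p A (e + w)) = ‖A *ᵥ w‖ / ‖A *ᵥ e‖ := by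
  have he : A *ᵥ e ≠ 0 := norm_pos_iff.mp ((norm_nonneg _).trans_lt h)
  rw [sphereMap, sphereMap, Matrix.mulVec_add, IsUltrametricDist.norm_add_eq_left_of_norm_lt h,
    dist_eq_norm, ← smul_sub, sub_add_cancel_left, norm_smul, norm_neg,
    norm_realToPadic_pi_norm he, inv_mul_eq_div]

end Perturbation

theorem not_actsDistallyOn_sphereMap_of_forall_exists_norm_mulVec_lt {κ : Type*}
    (M : κ → Matrix (Fin n) (Fin n) ℚ_[p]) (hdet : ∀ k, ‖(M k).det‖ = 1) {z : Fin n → ℚ_[p]}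
    (hz : z ≠ 0) (hM : ∀ ε > 0, ∃ k, ‖M k *ᵥ z‖ < ε) :
    ¬ ActsDistallyOn {f | ∃ k, f = sphereMap p (M k)} (sphere 0 1) := by
  intro hdistal
  obtain ⟨i, -⟩ := Function.ne_iff.mp hz
  have : Nonempty (Fin n) := ⟨i⟩
  set w := ((p : ℚ_[p]) * realToPadic p ‖z‖) • z with hw_def
  have hw : ‖w‖ = (p : ℝ)⁻¹ := by
    rw [hw_def, mul_smul, norm_smul, norm_realToPadic_pi_norm_smul_self hz, Padic.norm_p, mul_one]
  have hw1 : ‖w‖ < 1 := hw ▸ inv_lt_one_of_one_lt₀ (by exact_mod_cast (Fact.out : p.Prime).one_lt)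
  have hw0 : w ≠ 0 := norm_ne_zero_iff.mp (hw ▸ inv_ne_zero (mod_cast (Fact.out : p.Prime).ne_zero))
  obtain ⟨j, hj⟩ := exists_forall_exists_lt_and_of_finite (forall_exists_norm_mulVec_smul_lt hM _)
    fun k => (M k).exists_one_le_norm_col_of_one_le_norm_det (hdet k).ge
  set e : Fin n → ℚ_[p] := Pi.single j 1
  have he : ‖e‖ = 1 := by rw [Pi.norm_single, norm_one]
  have hew : ‖e + w‖ = 1 := by
    rw [IsUltrametricDist.norm_add_eq_left_of_norm_lt (he ▸ hw1), he]
  have hne : e ≠ e + w := by simpa using hw0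
  suffices ∃ d ∈ sphere 0 1, (d, d) ∈
      closure ((fun f => (f e, f (e + w))) '' {f | ∃ k, f = sphereMap p (M k)}) by
    obtain ⟨d, hd, hdd⟩ := this
    exact hdistal e (mem_sphere_zero_iff_norm.mpr he) (e + w) (mem_sphere_zero_iff_norm.mpr hew)
      hne d hd hdd
  refine (isCompact_sphere _ 1).exists_diag_mem_closure fun ε hε => ?_
  obtain ⟨k, hk, hcol⟩ := hj (min ε 1) (lt_min hε one_pos)
  have hu : 1 ≤ ‖M k *ᵥ e‖ := Matrix.mulVec_single_one (M k) j ▸ hcol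
  have hwu : ‖M k *ᵥ w‖ < ‖M k *ᵥ e‖ := (hk.trans_le (min_le_right _ _)).trans_le hu
  refine ⟨_, ⟨⟨_, ⟨k, rfl⟩, rfl⟩, sphereMap_mem_sphere (norm_pos_iff.mp (one_pos.trans_le hu)),
    sphereMap_add_mem_sphere hwu⟩, ?_⟩
  calc dist (sphereMap p (M k) e) (sphereMap p (M k) (e + w))
      = ‖M k *ᵥ w‖ / ‖M k *ᵥ e‖ := dist_sphereMap_add hwu
    _ ≤ ‖M k *ᵥ w‖ := div_le_self (norm_nonneg _) hu
    _ < ε := hk.trans_le (min_le_left _ _)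

end Padic

theorem stmt6_general (p : ℕ) [Fact p.Prime] (n : ℕ) (T : GL (Fin n) ℚ_[p])
    (hdet : ‖((T : Matrix (Fin n) (Fin n) ℚ_[p]).det)‖ = 1)
    (h : ActsDistallyOn {f : (Fin n → ℚ_[p]) → Fin n → ℚ_[p] |
        ∃ k : ℤ, f = sphereMap p ((T ^ k : GL (Fin n) ℚ_[p]) : Matrix (Fin n) (Fin n) ℚ_[p])}
      (Metric.sphere (0 : Fin n → ℚ_[p]) 1)) :
    ActsDistallyOn {f : (Fin n → ℚ_[p]) → Fin n → ℚ_[p] |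
        ∃ k : ℤ, f = fun v =>
          ((T ^ k : GL (Fin n) ℚ_[p]) : Matrix (Fin n) (Fin n) ℚ_[p]).mulVec v}
      Set.univ := by
  intro x _ y _ hxy d _ hdd
  refine not_actsDistallyOn_sphereMap_of_forall_exists_norm_mulVec_lt
    (fun k : ℤ => ((T ^ k : GL (Fin n) ℚ_[p]) : Matrix (Fin n) (Fin n) ℚ_[p]))
    (fun k => by rw [Matrix.GeneralLinearGroup.norm_det_zpow, hdet, one_zpow])
    (sub_ne_zero.mpr hxy) (fun ε hε => ?_) h
  obtain ⟨_, ⟨k, rfl⟩, hk⟩ := exists_norm_sub_lt_of_diag_mem_closure hdd hε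
  exact ⟨k, by rwa [Matrix.mulVec_sub]⟩

/-- If `|det T|_p = 1` and `T̄` is distal on the `p`-adic unit sphere, then `T` is distal
on `ℚ_p^n`. -/
theorem stmt6 (p : ℕ) [Fact p.Prime] (n : ℕ) (hn : 1 ≤ n) (T : GL (Fin n) ℚ_[p])
    (hdet : ‖((T : Matrix (Fin n) (Fin n) ℚ_[p]).det)‖ = 1)
    (h : ActsDistallyOn {f : (Fin n → ℚ_[p]) → Fin n → ℚ_[p] |
        ∃ k : ℤ, f = sphereMap p ((T ^ k : GL (Fin n) ℚ_[p]) : Matrix (Fin n) (Fin n) ℚ_[p])}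
      (Metric.sphere (0 : Fin n → ℚ_[p]) 1)) :
    ActsDistallyOn {f : (Fin n → ℚ_[p]) → Fin n → ℚ_[p] |
        ∃ k : ℤ, f = fun v =>
          ((T ^ k : GL (Fin n) ℚ_[p]) : Matrix (Fin n) (Fin n) ℚ_[p]).mulVec v}
      Set.univ :=
  stmt6_general p n T hdet h
end

section
/- Let p be a prime and n ≥ 2. Let U be the group of upper triangular matrices in SL(n, ℚ_p) with all diagonal entries equal to 1. Then every element of U generates a relatively compact cyclic subgroup of GL(n, ℚ_p), yet the family of maps {T̄ : T ∈ U} does not act distally on S_n. -/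
open scoped MatrixGroups

/-- The group of strictly upper triangular (= upper triangular with all diagonal entries `1`)
matrices in `SL(n, ℚ_p)`, viewed inside `GL(n, ℚ_p)`. -/
def unipotentUpper (p : ℕ) [Fact p.Prime] (n : ℕ) : Set (GL (Fin n) ℚ_[p]) :=
  {A | (∀ i j : Fin n, j < i → (A : Matrix (Fin n) (Fin n) ℚ_[p]) i j = 0) ∧
       ∀ i : Fin n, (A : Matrix (Fin n) (Fin n) ℚ_[p]) i i = 1}

/-! Conjugating a unipotent upper triangular `A` by `diag(c ^ i)` multiplies its `(i, j)` entry by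
`c ^ (i - j)`; for `‖c‖` large this makes every entry integral, and since the determinant is `1`
the conjugate lies in the compact group `GL(n, ℤ_p)`, which then contains all its powers.

For non-distality, the transvection `T = 1 + p ^ (-m) E₀₁` satisfies `T̄ v = p ^ m v + v₁ e₀`
whenever `‖v‖ ≤ 1 = ‖v₁‖`. Hence `T̄` sends both `e₁` and `(1, …, 1)` towards `e₀` as `m → ∞`. -/

open Matrix Filter Topology

lemma Matrix.GeneralLinearGroup.isCompact_range_map {ι R S : Type*} [Fintype ι] [DecidableEq ι]
    [CommRing R] [TopologicalSpace R] [IsTopologicalRing R] [CompactSpace R] [T1Space R]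
    [CommRing S] [TopologicalSpace S] {f : R →+* S} (hf : Continuous f) :
    IsCompact (Set.range (GeneralLinearGroup.map (n := ι) f)) := by
  have : CompactSpace (Matrix ι ι R) := inferInstanceAs (CompactSpace (ι → ι → R))
  exact isCompact_range <| Continuous.units_map _ <| continuous_id.matrix_map hf

lemma Matrix.IsUpperTriangular.norm_zpow_mul_apply_mul_zpow_inv_le_one {𝕜 : Type*}
    [NormedField 𝕜] {n : ℕ} {A : Matrix (Fin n) (Fin n) 𝕜} (hA : A.IsUpperTriangular)
    (hdiag : ∀ i, ‖A i i‖ ≤ 1) {c : 𝕜} (hc : 1 ≤ ‖c‖) (hAc : ∀ i j, ‖A i j‖ ≤ ‖c‖) (i j : Fin n) :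
    ‖c ^ (i : ℤ) * A i j * (c ^ (j : ℤ))⁻¹‖ ≤ 1 := by
  have hc0 : 0 < ‖c‖ := one_pos.trans_le hc
  rcases lt_trichotomy i j with hij | rfl | hji
  · have hij' : (i : ℤ) + 1 ≤ j := mod_cast hij
    rw [norm_mul, norm_mul, norm_inv, norm_zpow, norm_zpow, mul_inv_le_iff₀ (by positivity)]
    calc ‖c‖ ^ (i : ℤ) * ‖A i j‖ ≤ ‖c‖ ^ (i : ℤ) * ‖c‖ ^ (1 : ℤ) := by
          rw [zpow_one]; gcongr; exact hAc i j
      _ = ‖c‖ ^ ((i : ℤ) + 1) := (zpow_add₀ hc0.ne' _ _).symm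
      _ ≤ 1 * ‖c‖ ^ (j : ℤ) := by rw [one_mul]; exact zpow_le_zpow_right₀ hc hij'
  · rw [mul_comm, ← mul_assoc, inv_mul_cancel₀ (zpow_ne_zero _ (norm_pos_iff.1 hc0)), one_mul]
    exact hdiag i
  · rw [hA hji, mul_zero, zero_mul, norm_zero]
    exact zero_le_one

lemma Matrix.exists_norm_entry_le {𝕜 : Type*} [NontriviallyNormedField 𝕜] {ι : Type*}
    [Fintype ι] (A : Matrix ι ι 𝕜) : ∃ c : 𝕜, 1 ≤ ‖c‖ ∧ ∀ i j, ‖A i j‖ ≤ ‖c‖ := by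
  let _ := Matrix.seminormedAddCommGroup (m := ι) (n := ι) (α := 𝕜)
  obtain ⟨c, hc⟩ := NormedField.exists_lt_norm 𝕜 (max 1 ‖A‖)
  exact ⟨c, (le_max_left _ _).trans hc.le, fun i j =>
    (norm_entry_le_entrywise_sup_norm A).trans ((le_max_right _ _).trans hc.le)⟩

section Padic

variable {p : ℕ} [Fact p.Prime]

lemma Matrix.GeneralLinearGroup.mem_range_map_padicInt {ι : Type*} [Fintype ι] [DecidableEq ι]
    (g : GL ι ℚ_[p]) (hg : ∀ i j, ‖(g : Matrix ι ι ℚ_[p]) i j‖ ≤ 1)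
    (hdet : ‖(g : Matrix ι ι ℚ_[p]).det‖ = 1) :
    g ∈ Set.range (GeneralLinearGroup.map (n := ι) (PadicInt.Coe.ringHom (p := p))) := by
  let M : Matrix ι ι ℤ_[p] := of fun i j => ⟨g i j, hg i j⟩
  have hM : M.map PadicInt.Coe.ringHom = g := rfl
  have hdetM : IsUnit M.det := by
    have : (M.det : ℚ_[p]) = (g : Matrix ι ι ℚ_[p]).det :=
      (PadicInt.Coe.ringHom.map_det M).trans (congrArg Matrix.det hM)
    rw [PadicInt.isUnit_iff, PadicInt.norm_def, this, hdet]
  exact ⟨GeneralLinearGroup.mk'' M hdetM, Units.ext hM⟩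

lemma exists_conj_mem_range_map_padicInt_of_mem_unipotentUpper {n : ℕ} {A : GL (Fin n) ℚ_[p]}
    (hA : A ∈ unipotentUpper p n) :
    ∃ D : GL (Fin n) ℚ_[p],
      D * A * D⁻¹ ∈ Set.range (GeneralLinearGroup.map (PadicInt.Coe.ringHom (p := p))) := by
  obtain ⟨hlow, hdiag⟩ := hA
  obtain ⟨c, hc, hAc⟩ := (A : Matrix (Fin n) (Fin n) ℚ_[p]).exists_norm_entry_le
  let u : ℚ_[p]ˣ := Units.mk0 c (norm_pos_iff.1 (one_pos.trans_le hc))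
  let D : GL (Fin n) ℚ_[p] := Units.map (diagonalRingHom (Fin n) ℚ_[p]).toMonoidHom
    (MulEquiv.piUnits.symm fun i => u ^ (i : ℤ))
  refine ⟨D, GeneralLinearGroup.mem_range_map_padicInt _ (fun i j => ?_) ?_⟩
  · have hentry : ((D * A * D⁻¹ : GL (Fin n) ℚ_[p]) : Matrix (Fin n) (Fin n) ℚ_[p]) i j
        = c ^ (i : ℤ) * A i j * (c ^ (j : ℤ))⁻¹ := by
      simp [D, u, MulEquiv.piUnits]
    rw [hentry]
    exact IsUpperTriangular.norm_zpow_mul_apply_mul_zpow_inv_le_one hlow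
      (fun i => (hdiag i).symm ▸ norm_one.le) hc hAc i j
  · rw [Units.val_mul, Units.val_mul, det_units_conj, det_of_isUpperTriangular hlow]
    simp [hdiag]

theorem isCompact_closure_zpowers_of_mem_unipotentUpper {n : ℕ} {A : GL (Fin n) ℚ_[p]}
    (hA : A ∈ unipotentUpper p n) :
    IsCompact (closure {B : GL (Fin n) ℚ_[p] | ∃ k : ℤ, B = A ^ k}) := by
  obtain ⟨D, g, hg⟩ := exists_conj_mem_range_map_padicInt_of_mem_unipotentUpper hA
  have hcoe : Continuous (PadicInt.Coe.ringHom (p := p)) := continuous_subtype_val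
  have hK := (GeneralLinearGroup.isCompact_range_map (ι := Fin n) hcoe).image
    (f := fun B => D⁻¹ * B * D) (by fun_prop)
  refine hK.closure_of_subset ?_
  rintro _ ⟨k, rfl⟩
  refine ⟨_, ⟨g ^ k, rfl⟩, ?_⟩
  simp only [map_zpow, hg, conj_zpow]
  group

lemma realToPadic_pow (M : ℕ) : realToPadic p ((p : ℝ) ^ M) = (p : ℚ_[p]) ^ M := by
  have hp : (1 : ℝ) < p := mod_cast (Fact.out : p.Prime).one_lt
  rw [realToPadic, Real.logb_pow, Real.logb_self_eq_one hp, mul_one, Int.floor_natCast,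
    zpow_natCast]

lemma sphereMap_transvection {n : ℕ} (i j : Fin n) {M : ℕ} (hM : 0 < M)
    {v : Fin n → ℚ_[p]} (hv : ‖v‖ ≤ 1) (hvj : ‖v j‖ = 1) :
    sphereMap p (transvection i j ((p : ℚ_[p]) ^ (-(M : ℤ)))) v
      = (p : ℚ_[p]) ^ M • v + Pi.single i (v j) := by
  have hp : (1 : ℝ) < p := mod_cast (Fact.out : p.Prime).one_lt
  have hp0 : (p : ℚ_[p]) ≠ 0 := mod_cast (Fact.out : p.Prime).ne_zero
  set c : ℚ_[p] := (p : ℚ_[p]) ^ (-(M : ℤ))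
  have hTv : transvection i j c *ᵥ v = v + Pi.single i (c * v j) := by
    rw [transvection, add_mulVec, one_mulVec, single_mulVec_eq, ← Pi.single_smul, smul_eq_mul,
      mul_one]
  have hcv : ‖(Pi.single i (c * v j) : Fin n → ℚ_[p])‖ = (p : ℝ) ^ M := by
    rw [Pi.norm_single, norm_mul, hvj, mul_one, Padic.norm_p_zpow, neg_neg, zpow_natCast]
  have hnorm : ‖transvection i j c *ᵥ v‖ = (p : ℝ) ^ M := by
    have hlt : ‖v‖ < (p : ℝ) ^ M := hv.trans_lt (one_lt_pow₀ hp hM.ne')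
    rw [hTv, IsUltrametricDist.norm_add_eq_max_of_norm_ne_norm (hcv ▸ hlt.ne), hcv,
      max_eq_right hlt.le]
  rw [sphereMap, hnorm, realToPadic_pow, hTv, smul_add, ← Pi.single_smul, smul_eq_mul,
    ← mul_assoc, ← zpow_natCast, ← zpow_add₀ hp0, add_neg_cancel, zpow_zero, one_mul]

lemma tendsto_sphereMap_transvection {n : ℕ} (i j : Fin n) {v : Fin n → ℚ_[p]} (hv : ‖v‖ ≤ 1)
    (hvj : ‖v j‖ = 1) :
    Tendsto (fun m : ℕ => sphereMap p (transvection i j ((p : ℚ_[p]) ^ (-((m + 1 : ℕ) : ℤ)))) v)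
      atTop (𝓝 (Pi.single i (v j))) := by
  have hp : ‖(p : ℚ_[p])‖ < 1 := by
    rw [Padic.norm_p]; exact inv_lt_one_of_one_lt₀ (mod_cast (Fact.out : p.Prime).one_lt)
  have hpow : Tendsto (fun m : ℕ => (p : ℚ_[p]) ^ (m + 1)) atTop (𝓝 0) :=
    (tendsto_pow_atTop_nhds_zero_of_norm_lt_one hp).comp (tendsto_add_atTop_nat 1)
  simp_rw [sphereMap_transvection i j (Nat.succ_pos _) hv hvj]
  simpa using (hpow.smul_const v).add_const (Pi.single i (v j))

lemma toGL_transvection_mem_unipotentUpper {n : ℕ} {i j : Fin n} (hij : i < j) (c : ℚ_[p]) :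
    SpecialLinearGroup.toGL (SpecialLinearGroup.transvection hij.ne c) ∈ unipotentUpper p n := by
  refine ⟨fun k l hlk => ?_, fun k => ?_⟩ <;>
    simp only [SpecialLinearGroup.coe_GL_coe_matrix, SpecialLinearGroup.transvection_coe,
      Matrix.add_apply, one_apply, single_apply]
  · have : ¬(i = k ∧ j = l) := by rintro ⟨rfl, rfl⟩; exact lt_asymm hij hlk
    simp [hlk.ne', this]
  · have : ¬(i = k ∧ j = k) := by rintro ⟨rfl, rfl⟩; exact lt_irrefl _ hij
    simp [this]

theorem not_actsDistallyOn_unipotentUpper {n : ℕ} (hn : 2 ≤ n) :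
    ¬ ActsDistallyOn {f : (Fin n → ℚ_[p]) → Fin n → ℚ_[p] |
        ∃ A ∈ unipotentUpper p n, f = sphereMap p (A : Matrix (Fin n) (Fin n) ℚ_[p])}
      (Metric.sphere (0 : Fin n → ℚ_[p]) 1) := by
  have : Nonempty (Fin n) := ⟨⟨0, by omega⟩⟩
  let i : Fin n := ⟨0, by omega⟩
  let j : Fin n := ⟨1, by omega⟩
  have hij : i < j := Fin.mk_lt_mk.2 Nat.zero_lt_one
  have hx : ‖(Pi.single j 1 : Fin n → ℚ_[p])‖ = 1 := by rw [Pi.norm_single, norm_one]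
  have hy : ‖(1 : Fin n → ℚ_[p])‖ = 1 := norm_one
  have hxy : (Pi.single j 1 : Fin n → ℚ_[p]) ≠ 1 := fun h => by
    simpa [Pi.single_apply, hij.ne] using congrFun h i
  intro h
  refine h _ (mem_sphere_zero_iff_norm.2 hx) _ (mem_sphere_zero_iff_norm.2 hy) hxy
    (Pi.single i 1) (by simp [Pi.norm_single]) (mem_closure_of_tendsto
      ((tendsto_sphereMap_transvection i j hx.le (by simp)).prodMk_nhds
        (tendsto_sphereMap_transvection i j hy.le (by simp)))
      (Eventually.of_forall fun m => ⟨_, ⟨_, toGL_transvection_mem_unipotentUpper hij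
        ((p : ℚ_[p]) ^ (-((m + 1 : ℕ) : ℤ))), rfl⟩, rfl⟩))

end Padic

/-- For `n ≥ 2`, every element of the group `U` of upper triangular matrices with unit diagonal
in `SL(n, ℚ_p)` generates a relatively compact cyclic subgroup of `GL(n, ℚ_p)`, yet the family
`{T̄ : T ∈ U}` does not act distally on the `p`-adic unit sphere. -/
theorem stmt11 (p : ℕ) [Fact p.Prime] (n : ℕ) (hn : 2 ≤ n) :
    (∀ A ∈ unipotentUpper p n,
      IsCompact (closure {B : GL (Fin n) ℚ_[p] | ∃ k : ℤ, B = A ^ k})) ∧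
    ¬ ActsDistallyOn {f : (Fin n → ℚ_[p]) → Fin n → ℚ_[p] |
        ∃ A ∈ unipotentUpper p n, f = sphereMap p (A : Matrix (Fin n) (Fin n) ℚ_[p])}
      (Metric.sphere (0 : Fin n → ℚ_[p]) 1) :=
  ⟨fun _ => isCompact_closure_zpowers_of_mem_unipotentUpper,
    not_actsDistallyOn_unipotentUpper hn⟩
end
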